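/- Let X, Y ∈ R^{d×d} be invertible matrices. Then the polar factors satisfy ‖P(X) − P(Y)‖_F ≤ 4‖X − Y‖_F / (σ_min(X) + σ_min(Y)), where σ_min denotes the smallest singular value. -/

import Mathlib

/-!
Write `P, Q` for the polar factors of `X, Y` and `H = (XᵀX)^{1/2}`, `K = (YᵀY)^{1/2}`, so that
`X = P H` and `Y = Q K`, and put `D = 1 - PᵀQ`. Then `P - Q = P D`, and `D` solves the Sylvester
equation `H D + D K = Pᵀ (X - Y) - (X - Y)ᵀ Q`, whose right-hand side has Frobenius norm at most
`2 ‖X - Y‖`. Since `H ≥ σ_min(X)` and `K ≥ σ_min(Y)` in the Loewner order, pairing the equation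
with `D` gives `(σ_min(X) + σ_min(Y)) ‖D‖² ≤ ⟪D, H D + D K⟫ ≤ 2 ‖D‖ ‖X - Y‖`. This direct estimate
takes the place of the Davis–Kahan argument on the symmetric dilation.
-/

open Matrix BigOperators

noncomputable def frob {m n : Type*} [Fintype m] [Fintype n] (A : Matrix m n ℝ) : ℝ :=
  Real.sqrt (∑ i, ∑ j, (A i j) ^ 2)

/-- The lemma `Matrix.isHermitian_transpose_mul_self` of the older Mathlib (now removed). -/
theorem Matrix.isHermitian_transpose_mul_self {n : Type*} [Fintype n] (A : Matrix n n ℝ) :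
    (Aᵀ * A).IsHermitian := by
  simpa using Matrix.isHermitian_conjTranspose_mul_self A

/-- `Matrix.PosSemidef.sqrt` of the older Mathlib (now removed), with its old definition. -/
noncomputable def Matrix.PosSemidef.sqrt {n : Type*} [Fintype n] [DecidableEq n]
    {A : Matrix n n ℝ} (hA : A.PosSemidef) : Matrix n n ℝ :=
  hA.1.eigenvectorUnitary.1 * diagonal ((↑) ∘ (√·) ∘ hA.1.eigenvalues) *
    (star hA.1.eigenvectorUnitary : Matrix n n ℝ)

noncomputable def sv {d : ℕ} (A : Matrix (Fin d) (Fin d) ℝ) (i : Fin d) : ℝ :=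
  Real.sqrt ((Matrix.isHermitian_transpose_mul_self A).eigenvalues i)

/-- Smallest singular value. -/
noncomputable def smin {d : ℕ} (A : Matrix (Fin d) (Fin d) ℝ) : ℝ :=
  ⨅ i, sv A i

/-- Polar factor `P(M) = M (MᵀM)^{−1/2}` of a square real matrix. -/
noncomputable def polar {d : ℕ} (M : Matrix (Fin d) (Fin d) ℝ) :
    Matrix (Fin d) (Fin d) ℝ :=
  M * (Matrix.PosSemidef.sqrt (Matrix.posSemidef_conjTranspose_mul_self M))⁻¹

open scoped MatrixOrder Matrix.Norms.Frobenius

namespace Matrix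

section Frobenius

variable {l m n : Type*} [Fintype l] [Fintype m] [Fintype n]

theorem frobenius_norm_eq_frob (A : Matrix m n ℝ) : ‖A‖ = frob A := by
  rw [frobenius_norm_def, frob, Real.sqrt_eq_rpow]
  simp

theorem frobenius_norm_sq_eq_trace (A : Matrix m n ℝ) : ‖A‖ ^ 2 = (Aᵀ * A).trace := by
  rw [frobenius_norm_eq_frob, frob, Real.sq_sqrt (by positivity)]
  simp [trace, mul_apply, Finset.sum_comm (γ := n), sq]

theorem trace_transpose_mul_le (A B : Matrix m n ℝ) : (Aᵀ * B).trace ≤ ‖A‖ * ‖B‖ := by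
  -- The Frobenius norm is by definition the norm of `vec`.
  let vec (C : Matrix m n ℝ) : EuclideanSpace (EuclideanSpace ℝ n) m :=
    WithLp.toLp 2 fun i => WithLp.toLp 2 (C i)
  have h : (Aᵀ * B).trace = inner ℝ (vec A) (vec B) := by
    simp [vec, trace, mul_apply, PiLp.inner_apply, Finset.sum_comm (γ := n), mul_comm]
  exact h ▸ real_inner_le_norm (vec A) (vec B)

theorem frobenius_norm_mul_of_transpose_mul_self_eq_one [DecidableEq m] {P : Matrix l m ℝ}
    (hP : Pᵀ * P = 1) (A : Matrix m n ℝ) : ‖P * A‖ = ‖A‖ := by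
  rw [← sq_eq_sq₀ (norm_nonneg _) (norm_nonneg _), frobenius_norm_sq_eq_trace,
    frobenius_norm_sq_eq_trace, transpose_mul, Matrix.mul_assoc, ← Matrix.mul_assoc Pᵀ, hP,
    Matrix.one_mul]

theorem frobenius_norm_mul_of_mul_transpose_self_eq_one [DecidableEq n] {Q : Matrix n l ℝ}
    (hQ : Q * Qᵀ = 1) (A : Matrix m n ℝ) : ‖A * Q‖ = ‖A‖ := by
  rw [← frobenius_norm_transpose, transpose_mul,
    frobenius_norm_mul_of_transpose_mul_self_eq_one (by rwa [transpose_transpose]),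
    frobenius_norm_transpose]

end Frobenius

section Sylvester

variable {m n : Type*} [Fintype m] [Fintype n]

theorem mul_frobenius_norm_sq_le_trace_mul_left [DecidableEq m] {H : Matrix m m ℝ} {s : ℝ}
    (hH : s • 1 ≤ H) (D : Matrix m n ℝ) : s * ‖D‖ ^ 2 ≤ (Dᵀ * (H * D)).trace := by
  have h := ((le_iff.mp hH).conjTranspose_mul_mul_same D).trace_nonneg
  rw [conjTranspose_eq_transpose_of_trivial, Matrix.mul_sub, Matrix.sub_mul, trace_sub,
    Matrix.mul_smul, Matrix.smul_mul, trace_smul, Matrix.mul_one, Matrix.mul_assoc] at h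
  rw [frobenius_norm_sq_eq_trace]
  simpa using h

theorem mul_frobenius_norm_sq_le_trace_mul_right [DecidableEq n] {K : Matrix n n ℝ} {t : ℝ}
    (hK : t • 1 ≤ K) (D : Matrix m n ℝ) : t * ‖D‖ ^ 2 ≤ (Dᵀ * (D * K)).trace := by
  have h := ((le_iff.mp hK).mul_mul_conjTranspose_same D).trace_nonneg
  rw [conjTranspose_eq_transpose_of_trivial, Matrix.mul_sub, Matrix.sub_mul, trace_sub,
    Matrix.mul_smul, Matrix.smul_mul, trace_smul, Matrix.mul_one, trace_mul_comm] at h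
  rw [← frobenius_norm_transpose, frobenius_norm_sq_eq_trace, transpose_transpose]
  simpa using h

theorem add_mul_frobenius_norm_le [DecidableEq m] [DecidableEq n] {H : Matrix m m ℝ}
    {K : Matrix n n ℝ} {s t : ℝ} (hH : s • 1 ≤ H) (hK : t • 1 ≤ K) (D : Matrix m n ℝ) :
    (s + t) * ‖D‖ ≤ ‖H * D + D * K‖ := by
  rcases (norm_nonneg D).eq_or_lt with hD | hD
  · rw [← hD, mul_zero]
    exact norm_nonneg _
  refine le_of_mul_le_mul_right ?_ hD
  calc (s + t) * ‖D‖ * ‖D‖ = s * ‖D‖ ^ 2 + t * ‖D‖ ^ 2 := by ring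
    _ ≤ (Dᵀ * (H * D)).trace + (Dᵀ * (D * K)).trace :=
      add_le_add (mul_frobenius_norm_sq_le_trace_mul_left hH D)
        (mul_frobenius_norm_sq_le_trace_mul_right hK D)
    _ = (Dᵀ * (H * D + D * K)).trace := by rw [Matrix.mul_add, trace_add]
    _ ≤ ‖D‖ * ‖H * D + D * K‖ := trace_transpose_mul_le _ _
    _ = ‖H * D + D * K‖ * ‖D‖ := mul_comm _ _

theorem add_mul_frobenius_norm_sub_le [DecidableEq n] {P Q H K : Matrix n n ℝ} {s t : ℝ}
    (hP : Pᵀ * P = 1) (hQ : Qᵀ * Q = 1) (hHt : Hᵀ = H) (hKt : Kᵀ = K)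
    (hH : s • 1 ≤ H) (hK : t • 1 ≤ K) :
    (s + t) * ‖P - Q‖ ≤ 2 * ‖P * H - Q * K‖ := by
  set D := 1 - Pᵀ * Q
  set E := P * H - Q * K
  have hP' : P * Pᵀ = 1 := mul_eq_one_comm.mp hP
  have hPD : P - Q = P * D := by
    rw [Matrix.mul_sub, Matrix.mul_one, ← Matrix.mul_assoc, hP', Matrix.one_mul]
  have hsylvester : H * D + D * K = Pᵀ * E - Eᵀ * Q := by
    simp only [D, E, transpose_sub, transpose_mul, hHt, hKt, Matrix.mul_sub, Matrix.sub_mul,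
      Matrix.mul_one, Matrix.one_mul, Matrix.mul_assoc]
    rw [← Matrix.mul_assoc Pᵀ P, hP, Matrix.one_mul, hQ, Matrix.mul_one]
    abel
  calc (s + t) * ‖P - Q‖ = (s + t) * ‖D‖ := by
        rw [hPD, frobenius_norm_mul_of_transpose_mul_self_eq_one hP]
    _ ≤ ‖Pᵀ * E - Eᵀ * Q‖ := hsylvester ▸ add_mul_frobenius_norm_le hH hK D
    _ ≤ ‖Pᵀ * E‖ + ‖Eᵀ * Q‖ := norm_sub_le _ _
    _ = 2 * ‖E‖ := by
      rw [frobenius_norm_mul_of_transpose_mul_self_eq_one (by rwa [transpose_transpose]),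
        frobenius_norm_mul_of_mul_transpose_self_eq_one (mul_eq_one_comm.mp hQ),
        frobenius_norm_transpose, two_mul]

end Sylvester

namespace PosSemidef

variable {n : Type*} [Fintype n] [DecidableEq n] {A : Matrix n n ℝ} (hA : A.PosSemidef)

include hA

theorem sqrt_eq_cfc_sqrt : hA.sqrt = CFC.sqrt A := by
  rw [CFC.sqrt_eq_real_sqrt A hA.nonneg, cfcₙ_eq_cfc, hA.1.cfc_eq]
  rfl

theorem sqrt_mul_sqrt : hA.sqrt * hA.sqrt = A := by
  rw [hA.sqrt_eq_cfc_sqrt, CFC.sqrt_mul_sqrt_self A hA.nonneg]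

theorem transpose_sqrt : hA.sqrtᵀ = hA.sqrt := by
  rw [hA.sqrt_eq_cfc_sqrt, ← conjTranspose_eq_transpose_of_trivial]
  exact (CFC.sqrt_nonneg A).posSemidef.isHermitian

theorem smul_one_le_sqrt {s : ℝ} (hs : ∀ i, s ≤ √(hA.1.eigenvalues i)) : s • 1 ≤ hA.sqrt := by
  rw [← Algebra.algebraMap_eq_smul_one, hA.sqrt_eq_cfc_sqrt, CFC.sqrt_eq_real_sqrt A hA.nonneg,
    cfcₙ_eq_cfc]
  refine algebraMap_le_cfc _ _ _ ?_
  rw [hA.1.spectrum_real_eq_range_eigenvalues]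
  rintro _ ⟨i, rfl⟩
  exact hs i

end PosSemidef

end Matrix

section Polar

variable {d : ℕ} {X : Matrix (Fin d) (Fin d) ℝ}

theorem isUnit_det_sqrt_conjTranspose_mul_self (hX : IsUnit X.det) :
    IsUnit (posSemidef_conjTranspose_mul_self X).sqrt.det := by
  have h := (Matrix.isUnit_det_transpose X hX).mul hX
  rw [← det_mul, ← conjTranspose_eq_transpose_of_trivial,
    ← (posSemidef_conjTranspose_mul_self X).sqrt_mul_sqrt, det_mul, IsUnit.mul_iff] at h
  exact h.1

theorem polar_mul_sqrt (hX : IsUnit X.det) :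
    polar X * (posSemidef_conjTranspose_mul_self X).sqrt = X :=
  nonsing_inv_mul_cancel_right _ _ (isUnit_det_sqrt_conjTranspose_mul_self hX)

theorem transpose_polar_mul_polar (hX : IsUnit X.det) : (polar X)ᵀ * polar X = 1 := by
  have hH := isUnit_det_sqrt_conjTranspose_mul_self hX
  have hHt := (posSemidef_conjTranspose_mul_self X).transpose_sqrt
  have hHH : Xᵀ * X = _ := (posSemidef_conjTranspose_mul_self X).sqrt_mul_sqrt.symm
  set H := (posSemidef_conjTranspose_mul_self X).sqrt
  rw [polar, transpose_mul, transpose_nonsing_inv, hHt, Matrix.mul_assoc, ← Matrix.mul_assoc Xᵀ,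
    hHH, mul_nonsing_inv_cancel_right _ _ hH, nonsing_inv_mul _ hH]

theorem smul_one_le_sqrt_conjTranspose_mul_self :
    smin X • 1 ≤ (posSemidef_conjTranspose_mul_self X).sqrt :=
  (posSemidef_conjTranspose_mul_self X).smul_one_le_sqrt fun i =>
    ciInf_le (Set.finite_range (sv X)).bddBelow i

theorem smin_pos [NeZero d] (hX : IsUnit X.det) : 0 < smin X := by
  have hXX := PosDef.conjTranspose_mul_self X
    (mulVec_injective_iff_isUnit.mpr ((isUnit_iff_isUnit_det X).mpr hX))
  obtain ⟨i, hi⟩ := exists_eq_ciInf_of_finite (f := sv X)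
  rw [smin, ← hi]
  exact Real.sqrt_pos.mpr (hXX.eigenvalues_pos i)

end Polar

/-- Lipschitz bound for the polar factor of invertible matrices. -/
theorem polar_lipschitz (d : ℕ) (X Y : Matrix (Fin d) (Fin d) ℝ)
    (hX : IsUnit X.det) (hY : IsUnit Y.det) :
    frob (polar X - polar Y) ≤ 4 * frob (X - Y) / (smin X + smin Y) := by
  cases d with
  | zero => simp [frob]
  | succ d =>
    have hpos : 0 < smin X + smin Y := add_pos (smin_pos hX) (smin_pos hY)
    have key := add_mul_frobenius_norm_sub_le (transpose_polar_mul_polar hX)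
      (transpose_polar_mul_polar hY) (posSemidef_conjTranspose_mul_self X).transpose_sqrt
      (posSemidef_conjTranspose_mul_self Y).transpose_sqrt smul_one_le_sqrt_conjTranspose_mul_self
      smul_one_le_sqrt_conjTranspose_mul_self
    rw [polar_mul_sqrt hX, polar_mul_sqrt hY] at key
    rw [← frobenius_norm_eq_frob, ← frobenius_norm_eq_frob, le_div_iff₀ hpos]
    linarith [norm_nonneg (X - Y)]
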